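/- arXiv:1705.09750 — 2 statements merged into one kernel-verified Lean document; each statement's English description precedes it below -/
import Mathlib

section
/- Let X, Y, X', Y' be non-empty final segments of A*. If XY = X'Y', X ⊇ X', and Y ⊇ Y', then X = X' and Y = Y'. -/
/-- The Higman (subword) ordering on words over an ordered alphabet `A`. -/
def Hig {A : Type*} [PartialOrder A] (u v : List A) : Prop :=
  List.SublistForall₂ (· ≤ ·) u v

/-- Elementwise concatenation of languages. -/
def conc {A : Type*} (X Y : Set (List A)) : Set (List A) :=
  Set.image2 (· ++ ·) X Y

/-- A final segment (upward closed set) of `A*` for the Higman ordering. -/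
def IsFinal {A : Type*} [PartialOrder A] (F : Set (List A)) : Prop :=
  ∀ ⦃a b : List A⦄, Hig a b → a ∈ F → b ∈ F

/-- Upward closure of a set of words. -/
def upset {A : Type*} [PartialOrder A] (X : Set (List A)) : Set (List A) :=
  {b | ∃ a ∈ X, Hig a b}

/-- The set of minimal elements of a set of words. -/
def minSet {A : Type*} [PartialOrder A] (X : Set (List A)) : Set (List A) :=
  {x | x ∈ X ∧ ∀ y ∈ X, Hig y x → y = x}

/-- An antichain of words for the Higman ordering. -/
def IsAnti {A : Type*} [PartialOrder A] (U : Set (List A)) : Prop :=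
  ∀ x ∈ U, ∀ y ∈ U, x ≠ y → ¬ Hig x y

lemma hig_of_sublist {A : Type*} [PartialOrder A] {u v : List A} (h : List.Sublist u v) : Hig u v := by
  rw [Hig, List.sublistForall₂_iff]
  exact ⟨u, List.forall₂_refl u, h⟩

lemma exists_min_len {A : Type*} {S : Set (List A)} (h : S.Nonempty) :
    ∃ x ∈ S, ∀ y ∈ S, x.length ≤ y.length := by
  obtain ⟨x, hx⟩ := h
  obtain ⟨n, ⟨y, hy, rfl⟩, hmin⟩ := Nat.lt_wfRel.wf.has_min (List.length '' S) ⟨_, x, hx, rfl⟩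
  exact ⟨y, hy, fun z hz => le_of_not_gt (hmin _ ⟨z, hz, rfl⟩)⟩

theorem stmt6 {A : Type*} [PartialOrder A] (X Y X' Y' : Set (List A))
    (hX : IsFinal X) (hXne : X.Nonempty) (hY : IsFinal Y) (hYne : Y.Nonempty)
    (hX' : IsFinal X') (hX'ne : X'.Nonempty) (hY' : IsFinal Y') (hY'ne : Y'.Nonempty)
    (heq : conc X Y = conc X' Y') (hXX : X' ⊆ X) (hYY : Y' ⊆ Y) :
    X = X' ∧ Y = Y' := by
  constructor
  · apply Set.Subset.antisymm _ hXX
    intro x hx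
    obtain ⟨y', hy', hymin⟩ := exists_min_len hY'ne
    have hmem : x ++ y' ∈ conc X' Y' := by
      rw [← heq]; exact ⟨x, hx, y', hYY hy', rfl⟩
    obtain ⟨x₁, hx₁, y₁, hy₁, he'⟩ := hmem
    have he : x₁ ++ y₁ = x ++ y' := he'
    have hlen : x.length + y'.length = x₁.length + y₁.length := by
      have := congrArg List.length he
      simpa using this.symm
    have hle : x₁.length ≤ x.length := by
      have := hymin y₁ hy₁; omega
    have hpre : x₁ <+: x := by
      apply List.prefix_of_prefix_length_le _ (x.prefix_append y') hle
      exact he ▸ (x₁.prefix_append y₁)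
    exact hX' (hig_of_sublist hpre.sublist) hx₁
  · apply Set.Subset.antisymm _ hYY
    intro y hy
    obtain ⟨x', hx', hxmin⟩ := exists_min_len hX'ne
    have hmem : x' ++ y ∈ conc X' Y' := by
      rw [← heq]; exact ⟨x', hXX hx', y, hy, rfl⟩
    obtain ⟨x₁, hx₁, y₁, hy₁, he'⟩ := hmem
    have he : x₁ ++ y₁ = x' ++ y := he'
    have hlen : x'.length + y.length = x₁.length + y₁.length := by
      have := congrArg List.length he
      simpa using this.symm
    have hle : y₁.length ≤ y.length := by
      have := hxmin x₁ hx₁; omega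
    have hsuf : y₁ <:+ y := by
      apply List.suffix_of_suffix_length_le _ (List.suffix_append x' y) hle
      exact he ▸ (List.suffix_append x₁ y₁)
    exact hY' (hig_of_sublist hsuf.sublist) hy₁
end

section
/- Let A be an ordered alphabet. The monoid F°(A*) of non-empty final segments of A* under concatenation is a free monoid. -/
/-- An irreducible member of the monoid of final segments: distinct from `A*` and not a
concatenation of two final segments distinct from itself. -/
def IrredFinal {A : Type*} [PartialOrder A] (G : Set (List A)) : Prop :=
  G ≠ Set.univ ∧
    ∀ X Y : Set (List A), IsFinal X → IsFinal Y → G = conc X Y → G = X ∨ G = Y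

/-!
Levi's lemma: a monoid with an additive length function vanishing only at `1`, in which any two
factorizations `a * b = c * d` have a common refinement, is free on its irreducible elements.
Non-empty final segments form such a monoid, with the length of a shortest word as grading.
For equidivisibility, if `X * Y = Z * W` and a shortest word `z₀` of `Z` is no longer than the
shortest words of `X`, the left quotient `T = {t | z₀ ++ t ∈ X}` satisfies `X = Z * T` and
`W = T * Y`: comparing lengths of factorizations of `z₀ ++ w` and `x ++ y₀` for shortest words
`y₀ ∈ Y` and using upward closure gives all four inclusions.
-/

section Levi

def Equidivisible (M : Type*) [Monoid M] : Prop :=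
  ∀ ⦃a b c d : M⦄, a * b = c * d → ∃ t, (a = c * t ∧ d = t * b) ∨ (c = a * t ∧ b = t * d)

variable {M : Type*} [Monoid M]

structure IsGrading (deg : M → ℕ) : Prop where
  map_mul : ∀ a b, deg (a * b) = deg a + deg b
  eq_one_of_eq_zero : ∀ {a}, deg a = 0 → a = 1

namespace IsGrading

variable {deg : M → ℕ}

theorem eq_one_of_mul_eq_one_left (hdeg : IsGrading deg) {a b : M} (h : a * b = 1) :
    a = 1 := by
  have h1 := hdeg.map_mul 1 1
  have hab := hdeg.map_mul a b
  rw [mul_one] at h1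
  rw [h] at hab
  exact hdeg.eq_one_of_eq_zero (by omega)

theorem isUnit_iff (hdeg : IsGrading deg) {a : M} : IsUnit a ↔ a = 1 :=
  ⟨fun ha => hdeg.eq_one_of_mul_eq_one_left ha.exists_right_inv.choose_spec,
    fun ha => ha ▸ isUnit_one⟩

theorem exists_prod_eq (hdeg : IsGrading deg) (a : M) :
    ∃ l : List M, (∀ p ∈ l, Irreducible p) ∧ l.prod = a := by
  induction h : deg a using Nat.strong_induction_on generalizing a with
  | _ n ih =>
    by_cases ha : IsUnit a
    · exact ⟨[], by simp, (hdeg.isUnit_iff.1 ha).symm⟩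
    obtain hirr | ⟨b, c, hb, hc, rfl⟩ := irreducible_or_factor ha
    · exact ⟨[a], by simpa using hirr, by simp⟩
    have hb0 : deg b ≠ 0 := fun h0 => hb (hdeg.isUnit_iff.2 (hdeg.eq_one_of_eq_zero h0))
    have hc0 : deg c ≠ 0 := fun h0 => hc (hdeg.isUnit_iff.2 (hdeg.eq_one_of_eq_zero h0))
    rw [hdeg.map_mul] at h
    obtain ⟨lb, hlb, rfl⟩ := ih (deg b) (by omega) b rfl
    obtain ⟨lc, hlc, rfl⟩ := ih (deg c) (by omega) c rfl
    refine ⟨lb ++ lc, fun p hp => ?_, List.prod_append⟩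
    exact (List.mem_append.1 hp).elim (hlb p) (hlc p)

end IsGrading

namespace Equidivisible

variable {deg : M → ℕ}

theorem eq_and_eq_of_irreducible_mul_eq (hM : Equidivisible M) (hdeg : IsGrading deg)
    {p q x y : M} (hp : Irreducible p) (hq : Irreducible q) (h : p * x = q * y) :
    p = q ∧ x = y := by
  have of_eq_mul : ∀ {p q x y t : M}, Irreducible p → Irreducible q → p = q * t → y = t * x →
      p = q ∧ x = y := by
    intro p q x y t hp hq hpt hyt
    rcases hp.isUnit_or_isUnit hpt with hu | hu
    · exact absurd hu hq.not_isUnit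
    · rw [hdeg.isUnit_iff.1 hu] at hpt hyt
      simp [hpt, hyt]
  obtain ⟨t, ⟨hpt, hyt⟩ | ⟨hqt, hxt⟩⟩ := hM h
  · exact of_eq_mul hp hq hpt hyt
  · obtain ⟨hqp, hyx⟩ := of_eq_mul hq hp hqt hxt
    exact ⟨hqp.symm, hyx.symm⟩

theorem eq_of_prod_eq (hM : Equidivisible M) (hdeg : IsGrading deg) :
    ∀ {l₁ l₂ : List M}, (∀ p ∈ l₁, Irreducible p) → (∀ p ∈ l₂, Irreducible p) →
      l₁.prod = l₂.prod → l₁ = l₂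
  | [], [], _, _, _ => rfl
  | [], q :: s, _, h₂, h => by
    rw [List.prod_nil, List.prod_cons] at h
    exact absurd (hdeg.eq_one_of_mul_eq_one_left h.symm) (h₂ q List.mem_cons_self).ne_one
  | p :: r, [], h₁, _, h => by
    rw [List.prod_nil, List.prod_cons] at h
    exact absurd (hdeg.eq_one_of_mul_eq_one_left h) (h₁ p List.mem_cons_self).ne_one
  | p :: r, q :: s, h₁, h₂, h => by
    simp only [List.prod_cons, List.forall_mem_cons] at h h₁ h₂
    obtain ⟨rfl, hrs⟩ := hM.eq_and_eq_of_irreducible_mul_eq hdeg h₁.1 h₂.1 h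
    rw [hM.eq_of_prod_eq hdeg h₁.2 h₂.2 hrs]

theorem existsUnique_prod_eq (hM : Equidivisible M) (hdeg : IsGrading deg) (a : M) :
    ∃! l : List M, (∀ p ∈ l, Irreducible p) ∧ l.prod = a := by
  obtain ⟨l, hl, hprod⟩ := hdeg.exists_prod_eq a
  refine ⟨l, ⟨hl, hprod⟩, fun l' hl' => ?_⟩
  exact hM.eq_of_prod_eq hdeg hl'.1 hl (hl'.2.trans hprod.symm)

end Equidivisible

end Levi

theorem List.exists_eq_append_of_append_eq_append_left {α : Type*} {a b c d : List α}
    (h : a ++ b = c ++ d) (hl : a.length ≤ c.length) : ∃ t, c = a ++ t ∧ b = t ++ d := by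
  rcases List.append_eq_append_iff.1 h with h' | ⟨s, rfl, rfl⟩
  · exact h'
  · rw [List.length_append] at hl
    obtain rfl : s = [] := List.length_eq_zero_iff.1 (by omega)
    exact ⟨[], by simp, by simp⟩

theorem List.exists_eq_append_of_append_eq_append_right {α : Type*} {a b c d : List α}
    (h : a ++ b = c ++ d) (hl : b.length ≤ d.length) : ∃ t, a = c ++ t ∧ d = t ++ b := by
  have hlen := congrArg List.length h
  rw [List.length_append, List.length_append] at hlen
  exact List.exists_eq_append_of_append_eq_append_left h.symm (by omega)

theorem List.sublistForall₂_append_left_iff {α β : Type*} {R : α → β → Prop}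
    {l₁ l₂ : List α} {l : List β} :
    List.SublistForall₂ R (l₁ ++ l₂) l ↔
      ∃ m₁ m₂, l = m₁ ++ m₂ ∧ List.SublistForall₂ R l₁ m₁ ∧ List.SublistForall₂ R l₂ m₂ := by
  simp only [List.sublistForall₂_iff]
  constructor
  · rintro ⟨m, hR, hm⟩
    have hR₁ := List.forall₂_take l₁.length hR
    have hR₂ := List.forall₂_drop l₁.length hR
    rw [List.take_left] at hR₁
    rw [List.drop_left] at hR₂
    rw [← List.take_append_drop l₁.length m] at hm
    obtain ⟨m₁, m₂, rfl, hm₁, hm₂⟩ := List.append_sublist_iff.1 hm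
    exact ⟨m₁, m₂, rfl, ⟨_, hR₁, hm₁⟩, ⟨_, hR₂, hm₂⟩⟩
  · rintro ⟨m₁, m₂, rfl, ⟨k₁, hR₁, hk₁⟩, ⟨k₂, hR₂, hk₂⟩⟩
    exact ⟨k₁ ++ k₂, List.rel_append hR₁ hR₂, hk₁.append hk₂⟩

section FinalSegments

variable {A : Type*}

theorem conc_assoc (X Y Z : Set (List A)) : conc (conc X Y) Z = conc X (conc Y Z) :=
  Set.image2_assoc List.append_assoc

noncomputable def minLength (F : Set (List A)) : ℕ := sInf (List.length '' F)

theorem append_mem_conc {X Y : Set (List A)} {x y : List A} (hx : x ∈ X) (hy : y ∈ Y) :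
    x ++ y ∈ conc X Y :=
  Set.mem_image2_of_mem hx hy

theorem minLength_le {F : Set (List A)} {w : List A} (h : w ∈ F) : minLength F ≤ w.length :=
  Nat.sInf_le ⟨w, h, rfl⟩

theorem exists_length_eq_minLength {F : Set (List A)} (h : F.Nonempty) :
    ∃ w ∈ F, w.length = minLength F :=
  Nat.sInf_mem (h.image _)

theorem minLength_conc {X Y : Set (List A)} (hX : X.Nonempty) (hY : Y.Nonempty) :
    minLength (conc X Y) = minLength X + minLength Y := by
  obtain ⟨x, hx, hxl⟩ := exists_length_eq_minLength hX
  obtain ⟨y, hy, hyl⟩ := exists_length_eq_minLength hY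
  obtain ⟨-, ⟨u, hu, v, hv, rfl⟩, huv⟩ : ∃ w ∈ conc X Y, w.length = minLength (conc X Y) :=
    exists_length_eq_minLength (hX.image2 hY)
  have hle := minLength_le (append_mem_conc hx hy)
  rw [List.length_append] at hle huv
  have := minLength_le hu
  have := minLength_le hv
  omega

variable [PartialOrder A]

theorem hig_append_left (u : List A) {v w : List A} (h : Hig v w) : Hig (u ++ v) (u ++ w) :=
  List.sublistForall₂_append_left_iff.2 ⟨u, w, rfl, List.Sublist.refl u |>.sublistForall₂, h⟩

theorem isFinal_univ : IsFinal (Set.univ : Set (List A)) := fun _ _ _ _ => trivial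

namespace IsFinal

variable {F : Set (List A)}

theorem append_mem_left (hF : IsFinal F) (u : List A) {v : List A} (hv : v ∈ F) : u ++ v ∈ F :=
  hF (List.sublist_append_right u v).sublistForall₂ hv

theorem append_mem_right (hF : IsFinal F) {u : List A} (hu : u ∈ F) (v : List A) : u ++ v ∈ F :=
  hF (List.sublist_append_left u v).sublistForall₂ hu

theorem eq_univ_of_nil_mem (hF : IsFinal F) (h : [] ∈ F) : F = Set.univ :=
  Set.eq_univ_of_forall fun _ => hF List.SublistForall₂.nil h

theorem conc_univ (hF : IsFinal F) : conc F Set.univ = F :=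
  Set.Subset.antisymm (by rintro - ⟨u, hu, v, -, rfl⟩; exact hF.append_mem_right hu v)
    fun w hw => ⟨w, hw, [], trivial, List.append_nil w⟩

theorem univ_conc (hF : IsFinal F) : conc Set.univ F = F :=
  Set.Subset.antisymm (by rintro - ⟨u, -, v, hv, rfl⟩; exact hF.append_mem_left u hv)
    fun w hw => ⟨[], trivial, w, hw, rfl⟩

end IsFinal

theorem isFinal_conc {X Y : Set (List A)} (hX : IsFinal X) (hY : IsFinal Y) :
    IsFinal (conc X Y) := by
  rintro - w hw ⟨x, hx, y, hy, rfl⟩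
  obtain ⟨w₁, w₂, rfl, h₁, h₂⟩ := List.sublistForall₂_append_left_iff.1 hw
  exact ⟨w₁, hX h₁ hx, w₂, hY h₂ hy, rfl⟩

theorem IsFinal.eq_univ_of_minLength_eq_zero {F : Set (List A)} (hF : IsFinal F)
    (hne : F.Nonempty) (h : minLength F = 0) : F = Set.univ := by
  obtain ⟨w, hw, hl⟩ := exists_length_eq_minLength hne
  obtain rfl : w = [] := List.length_eq_zero_iff.1 (hl.trans h)
  exact hF.eq_univ_of_nil_mem hw

theorem exists_conc_eq_of_conc_eq {X Y Z W : Set (List A)} (hX : IsFinal X)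
    (hZ : IsFinal Z) (hW : IsFinal W) (hY : Y.Nonempty) (hZne : Z.Nonempty)
    (h : conc X Y = conc Z W) (hle : minLength Z ≤ minLength X) :
    ∃ T, IsFinal T ∧ X = conc Z T ∧ W = conc T Y := by
  obtain ⟨z₀, hz₀, hz₀l⟩ := exists_length_eq_minLength hZne
  obtain ⟨y₀, hy₀, hy₀l⟩ := exists_length_eq_minLength hY
  set T := {t | z₀ ++ t ∈ X}
  have hT : IsFinal T := fun t t' htt' ht => hX (hig_append_left z₀ htt') ht
  have hTY : W = conc T Y := by
    refine Set.Subset.antisymm (fun w hw => ?_) ?_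
    · obtain ⟨x, hx, y, hy, hxy⟩ : z₀ ++ w ∈ conc X Y := h ▸ append_mem_conc hz₀ hw
      obtain ⟨t, rfl, rfl⟩ := List.exists_eq_append_of_append_eq_append_left hxy.symm
        (hz₀l ▸ hle.trans (minLength_le hx))
      exact append_mem_conc hx hy
    · rintro - ⟨t, ht, y, hy, rfl⟩
      obtain ⟨z, hz, w, hw, hzw⟩ : z₀ ++ (t ++ y) ∈ conc Z W :=
        h ▸ List.append_assoc _ _ _ ▸ append_mem_conc ht hy
      obtain ⟨s, -, hs⟩ := List.exists_eq_append_of_append_eq_append_left hzw.symm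
        (hz₀l ▸ minLength_le hz)
      exact (hs ▸ hW.append_mem_left s hw : t ++ y ∈ W)
  refine ⟨T, hT, Set.Subset.antisymm (fun x hx => ?_) ?_, hTY⟩
  · obtain ⟨u, hu, y, hy, huy⟩ : x ++ y₀ ∈ conc (conc Z T) Y := by
      rw [conc_assoc, ← hTY, ← h]
      exact append_mem_conc hx hy₀
    obtain ⟨s, rfl, -⟩ := List.exists_eq_append_of_append_eq_append_right huy.symm
      (hy₀l ▸ minLength_le hy)
    exact (isFinal_conc hZ hT).append_mem_right hu s
  · rintro - ⟨z, hz, t, ht, rfl⟩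
    obtain ⟨x, hx, y, hy, hxy⟩ : z ++ t ++ y₀ ∈ conc X Y := by
      rw [h, hTY, List.append_assoc]
      exact append_mem_conc hz (append_mem_conc ht hy₀)
    obtain ⟨s, hs, -⟩ := List.exists_eq_append_of_append_eq_append_right hxy.symm
      (hy₀l ▸ minLength_le hy)
    exact (hs ▸ hX.append_mem_right hx s : z ++ t ∈ X)

end FinalSegments

abbrev FinalSegment (A : Type*) [PartialOrder A] : Type _ :=
  {F : Set (List A) // IsFinal F ∧ F.Nonempty}

namespace FinalSegment

variable {A : Type*} [PartialOrder A]

instance : Monoid (FinalSegment A) where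
  mul X Y := ⟨conc X.1 Y.1, isFinal_conc X.2.1 Y.2.1, X.2.2.image2 Y.2.2⟩
  one := ⟨Set.univ, isFinal_univ, Set.univ_nonempty⟩
  mul_assoc X Y Z := Subtype.ext (conc_assoc X.1 Y.1 Z.1)
  one_mul X := Subtype.ext X.2.1.univ_conc
  mul_one X := Subtype.ext X.2.1.conc_univ

@[simp] theorem coe_mul (X Y : FinalSegment A) :
    ((X * Y : FinalSegment A) : Set (List A)) = conc X Y := rfl

theorem coe_list_prod (l : List (FinalSegment A)) :
    (l.prod : Set (List A)) = (l.map Subtype.val).foldr conc Set.univ := by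
  induction l with
  | nil => rfl
  | cons X l ih => simp [ih]

theorem isGrading_minLength : IsGrading fun X : FinalSegment A => minLength X.1 where
  map_mul X Y := minLength_conc X.2.2 Y.2.2
  eq_one_of_eq_zero {X} h := Subtype.ext (X.2.1.eq_univ_of_minLength_eq_zero X.2.2 h)

theorem equidivisible : Equidivisible (FinalSegment A) := by
  intro X Y Z W h
  have h' : conc X.1 Y.1 = conc Z.1 W.1 := congrArg Subtype.val h
  rcases le_total (minLength Z.1) (minLength X.1) with hle | hle
  · obtain ⟨T, hT, hX, hW⟩ := exists_conc_eq_of_conc_eq X.2.1 Z.2.1 W.2.1 Y.2.2 Z.2.2 h' hle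
    have hTne : T.Nonempty := (hW ▸ W.2.2).of_image2_left
    exact ⟨⟨T, hT, hTne⟩, .inl ⟨Subtype.ext hX, Subtype.ext hW⟩⟩
  · obtain ⟨T, hT, hZ, hY⟩ := exists_conc_eq_of_conc_eq Z.2.1 X.2.1 Y.2.1 W.2.2 X.2.2 h'.symm hle
    have hTne : T.Nonempty := (hY ▸ Y.2.2).of_image2_left
    exact ⟨⟨T, hT, hTne⟩, .inr ⟨Subtype.ext hZ, Subtype.ext hY⟩⟩

theorem irreducible_iff {G : FinalSegment A} : Irreducible G ↔ IrredFinal G.1 := by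
  have hunit : ∀ {X : FinalSegment A}, IsUnit X ↔ X.1 = Set.univ := fun {X} =>
    isGrading_minLength.isUnit_iff.trans Subtype.ext_iff
  simp only [_root_.irreducible_iff, hunit]
  constructor
  · rintro ⟨hG, hirr⟩
    refine ⟨hG, fun X Y hX hY hXY => ?_⟩
    have hXne : X.Nonempty := (hXY ▸ G.2.2).of_image2_left
    have hYne : Y.Nonempty := (hXY ▸ G.2.2).of_image2_right
    rcases hirr (a := ⟨X, hX, hXne⟩) (b := ⟨Y, hY, hYne⟩) (Subtype.ext hXY) with hu | hu
    · exact .inr (hXY.trans ((show X = Set.univ from hu) ▸ hY.univ_conc))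
    · exact .inl (hXY.trans ((show Y = Set.univ from hu) ▸ hX.conc_univ))
  · rintro ⟨hG, hirr⟩
    refine ⟨hG, fun X Y hXY => ?_⟩
    have hdeg : minLength G.1 = minLength X.1 + minLength Y.1 :=
      isGrading_minLength.map_mul X Y ▸ congrArg (fun Z : FinalSegment A => minLength Z.1) hXY
    rcases hirr X.1 Y.1 X.2.1 Y.2.1 (congrArg Subtype.val hXY) with hX | hY
    · exact .inr (Y.2.1.eq_univ_of_minLength_eq_zero Y.2.2 (by rw [hX] at hdeg; omega))
    · exact .inl (X.2.1.eq_univ_of_minLength_eq_zero X.2.2 (by rw [hY] at hdeg; omega))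

end FinalSegment

/-- Freeness of the monoid of non-empty final segments, expressed as unique
factorization into irreducibles (the neutral element being `A* = Set.univ`). -/
theorem stmt17 {A : Type*} [PartialOrder A] (F : Set (List A))
    (hF : IsFinal F) (hne : F.Nonempty) :
    ∃! l : List (Set (List A)),
      (∀ G ∈ l, IsFinal G ∧ G.Nonempty ∧ IrredFinal G) ∧
      l.foldr conc Set.univ = F := by
  obtain ⟨l, ⟨hirr, hprod⟩, huniq⟩ := FinalSegment.equidivisible.existsUnique_prod_eq
    FinalSegment.isGrading_minLength (⟨F, hF, hne⟩ : FinalSegment A)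
  refine ⟨l.map Subtype.val, ⟨?_, ?_⟩, ?_⟩
  · simp only [List.mem_map]
    rintro - ⟨G, hG, rfl⟩
    exact ⟨G.2.1, G.2.2, FinalSegment.irreducible_iff.1 (hirr G hG)⟩
  · rw [← FinalSegment.coe_list_prod, hprod]
  · rintro l' ⟨hl', hprod'⟩
    lift l' to List (FinalSegment A) using fun G hG => ⟨(hl' G hG).1, (hl' G hG).2.1⟩
    refine congrArg _ (huniq l' ⟨fun G hG => ?_, Subtype.ext ?_⟩)
    · exact FinalSegment.irreducible_iff.2 (hl' G (List.mem_map_of_mem hG)).2.2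
    · rw [FinalSegment.coe_list_prod, hprod']
end
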